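/- If μ* minimizes f over {μ : ‖μ‖₀ ≤ B}, then for every i ∈ supp(μ*) and every j ∉ supp(μ*) one has D_i μ̂_i² ≥ D_j μ̂_j². That is, the coordinates retained by an optimal solution carry the largest confidence-weighted squared means. -/

import Mathlib

/-!
Exchange argument: zeroing a retained coordinate `i` of `μ*` and setting a discarded coordinate
`j` to `μ̂ j` keeps the vector `B`-sparse and changes `2 f` by
`D i μ̂ i ^ 2 - D i (μ* i - μ̂ i) ^ 2 - D j μ̂ j ^ 2 ≤ D i μ̂ i ^ 2 - D j μ̂ j ^ 2`,
which optimality of `μ*` forces to be nonnegative.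
-/

open Finset Function

section

variable {ι : Type*} [Fintype ι] [DecidableEq ι]

theorem Finset.sum_apply_update_add {M : Type*} [AddCommMonoid M] {α : Type*}
    (F : ι → α → M) (x : ι → α) (i : ι) (a : α) :
    ∑ k, F k (update x i a k) + F i (x i) = ∑ k, F k (x k) + F i a := by
  simp only [apply_update F, sum_update_of_mem (mem_univ i)]
  rw [← add_sum_erase univ (fun k => F k (x k)) (mem_univ i), sdiff_singleton_eq_erase]
  abel

theorem card_filter_ne_zero_update_update_le {M : Type*} [Zero M] [DecidableEq M]
    (x : ι → M) {i : ι} (hi : x i ≠ 0) (j : ι) (a : M) :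
    #{k | update (update x i 0) j a k ≠ 0} ≤ #{k | x k ≠ 0} := by
  have hsub : ({k | update (update x i 0) j a k ≠ 0} : Finset ι) ⊆
      insert j (({k | x k ≠ 0} : Finset ι).erase i) := by
    intro k
    by_cases hkj : k = j <;> by_cases hki : k = i <;> simp_all
  have hmem : i ∈ ({k | x k ≠ 0} : Finset ι) := by simpa using hi
  calc #{k | update (update x i 0) j a k ≠ 0}
      ≤ #(insert j (({k | x k ≠ 0} : Finset ι).erase i)) := card_le_card hsub
    _ ≤ #(({k | x k ≠ 0} : Finset ι).erase i) + 1 := card_insert_le _ _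
    _ = #{k | x k ≠ 0} := card_erase_add_one hmem

theorem sum_mul_sq_sub_update_update (D c x : ι → ℝ) {i j : ι} (hij : i ≠ j) (hj : x j = 0) :
    ∑ k, D k * (update (update x i 0) j (c j) k - c k) ^ 2 + D i * (x i - c i) ^ 2
      + D j * c j ^ 2 = ∑ k, D k * (x k - c k) ^ 2 + D i * c i ^ 2 := by
  have hswap_j := sum_apply_update_add (fun k t => D k * (t - c k) ^ 2) (update x i 0) j (c j)
  have hswap_i := sum_apply_update_add (fun k t => D k * (t - c k) ^ 2) x i 0
  simp only [update_of_ne hij.symm, hj, sub_self] at hswap_j hswap_i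
  linear_combination hswap_j + hswap_i

end

theorem sofs_truncation_support_has_largest_weighted_means_general
    (d B : ℕ) (D μhat : Fin d → ℝ) (hD : ∀ j, D j > 0)
    (μstar : Fin d → ℝ)
    (hcard : (Finset.univ.filter fun j => μstar j ≠ 0).card ≤ B)
    (hmin : ∀ μ : Fin d → ℝ, (Finset.univ.filter fun j => μ j ≠ 0).card ≤ B →
      (1 / 2) * ∑ j, D j * (μstar j - μhat j) ^ 2 ≤
        (1 / 2) * ∑ j, D j * (μ j - μhat j) ^ 2) :
    ∀ i, μstar i ≠ 0 → ∀ j, μstar j = 0 →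
      D i * (μhat i) ^ 2 ≥ D j * (μhat j) ^ 2 := by
  intro i hi j hj
  have hij : i ≠ j := fun h => hi (h ▸ hj)
  have hopt := hmin _ ((card_filter_ne_zero_update_update_le μstar hi j (μhat j)).trans hcard)
  have hswap := sum_mul_sq_sub_update_update D μhat μstar hij hj
  have hi_nonneg : 0 ≤ D i * (μstar i - μhat i) ^ 2 := by have := hD i; positivity
  linarith

/-- If `μ*` minimizes `f μ = (1/2) ∑ j, D j * (μ j - μ̂ j)^2` over
`{μ : ‖μ‖₀ ≤ B}`, then the retained coordinates carry the largest
confidence-weighted squared means: for `i` in the support of `μ*` and `j`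
outside it, `D i * μ̂ i ^ 2 ≥ D j * μ̂ j ^ 2`. -/
theorem sofs_truncation_support_has_largest_weighted_means
    (d B : ℕ) (hB : B ≤ d) (D μhat : Fin d → ℝ) (hD : ∀ j, D j > 0)
    (μstar : Fin d → ℝ)
    (hcard : (Finset.univ.filter fun j => μstar j ≠ 0).card ≤ B)
    (hmin : ∀ μ : Fin d → ℝ, (Finset.univ.filter fun j => μ j ≠ 0).card ≤ B →
      (1 / 2) * ∑ j, D j * (μstar j - μhat j) ^ 2 ≤
        (1 / 2) * ∑ j, D j * (μ j - μhat j) ^ 2) :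
    ∀ i, μstar i ≠ 0 → ∀ j, μstar j = 0 →
      D i * (μhat i) ^ 2 ≥ D j * (μhat j) ^ 2 :=
  sofs_truncation_support_has_largest_weighted_means_general d B D μhat hD μstar hcard hmin
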